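/- arXiv:math/9506202 — 2 statements merged into one kernel-verified Lean document; each statement's English description precedes it below -/
import Mathlib

section
/- If a formal power series v(x,y) is skew-invariant under both τ₁* and τ₂* (i.e., v∘τ₁* = -v and v∘τ₂* = -v, where τ₁*(x,y)=(-x,-2x+y), τ₂*(x,y)=(-x,2x+y)), then v is independent of y and satisfies v(-x,0) = -v(x,0); hence if additionally v(x,0) = v(-x,0), then v = 0. -/
open MvPowerSeries

/-- Composition `v ∘ τ` of `v(x,y) ∈ ℂ[[x,y]]` with the linear map
`τ(x,y) = (e·x, c·x + y)`, defined coefficientwise. -/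
noncomputable def compLin (e c : ℂ) (u : MvPowerSeries (Fin 2) ℂ) :
    MvPowerSeries (Fin 2) ℂ :=
  fun m => ∑ t ∈ Finset.range (m 0 + 1),
    e ^ (m 0 - t) * c ^ t * ((m 1 + t).choose t : ℂ) *
      MvPowerSeries.coeff (Finsupp.single 0 (m 0 - t) + Finsupp.single 1 (m 1 + t)) u

open Finset

lemma eval0 (i j : ℕ) : (Finsupp.single 0 i + Finsupp.single 1 j : Fin 2 →₀ ℕ) 0 = i := by
  simp [Finsupp.single_apply]
lemma eval1 (i j : ℕ) : (Finsupp.single 0 i + Finsupp.single 1 j : Fin 2 →₀ ℕ) 1 = j := by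
  simp [Finsupp.single_apply]

lemma compLin_coeff (e c : ℂ) (u : MvPowerSeries (Fin 2) ℂ) (m : Fin 2 →₀ ℕ) :
    MvPowerSeries.coeff m (compLin e c u) =
      ∑ t ∈ range (m 0 + 1), e ^ (m 0 - t) * c ^ t * ((m 1 + t).choose t : ℂ) *
        MvPowerSeries.coeff (Finsupp.single 0 (m 0 - t) + Finsupp.single 1 (m 1 + t)) u := rfl

lemma compLin_coeff' (e c : ℂ) (u : MvPowerSeries (Fin 2) ℂ) (i j : ℕ) :
    MvPowerSeries.coeff (Finsupp.single 0 i + Finsupp.single 1 j) (compLin e c u) =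
      ∑ t ∈ range (i + 1), e ^ (i - t) * c ^ t * ((j + t).choose t : ℂ) *
        MvPowerSeries.coeff (Finsupp.single 0 (i - t) + Finsupp.single 1 (j + t)) u := by
  rw [compLin_coeff, eval0, eval1]

lemma fin2_decomp (m : Fin 2 →₀ ℕ) :
    m = Finsupp.single 0 (m 0) + Finsupp.single 1 (m 1) := by
  ext i
  fin_cases i <;> simp [Finsupp.single_apply]

lemma compLin_comp (e c e' c' : ℂ) (u : MvPowerSeries (Fin 2) ℂ) (i j : ℕ) :
    MvPowerSeries.coeff (Finsupp.single 0 i + Finsupp.single 1 j)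
        (compLin e' c' (compLin e c u)) =
      MvPowerSeries.coeff (Finsupp.single 0 i + Finsupp.single 1 j)
        (compLin (e * e') (c * e' + c') u) := by
  rw [compLin_coeff', compLin_coeff']
  have hL : ∀ s ∈ range (i + 1),
      e' ^ (i - s) * c' ^ s * ((j + s).choose s : ℂ) *
        MvPowerSeries.coeff (Finsupp.single 0 (i - s) + Finsupp.single 1 (j + s))
          (compLin e c u)
      = ∑ t ∈ range (i - s + 1),
          e' ^ (i - s) * c' ^ s * ((j + s).choose s : ℂ) *
          (e ^ (i - s - t) * c ^ t * ((j + s + t).choose t : ℂ) *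
            MvPowerSeries.coeff
              (Finsupp.single 0 (i - s - t) + Finsupp.single 1 (j + s + t)) u) := by
    intro s _
    rw [compLin_coeff', Finset.mul_sum]
  have hR : ∀ w ∈ range (i + 1),
      (e * e') ^ (i - w) * (c * e' + c') ^ w * ((j + w).choose w : ℂ) *
        MvPowerSeries.coeff (Finsupp.single 0 (i - w) + Finsupp.single 1 (j + w)) u
      = ∑ t ∈ range (w + 1),
          (e * e') ^ (i - w) * ((c * e') ^ t * c' ^ (w - t) * (w.choose t : ℂ)) *
            ((j + w).choose w : ℂ) *
            MvPowerSeries.coeff (Finsupp.single 0 (i - w) + Finsupp.single 1 (j + w)) u := by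
    intro w _
    rw [add_pow, Finset.mul_sum, Finset.sum_mul, Finset.sum_mul]
  rw [Finset.sum_congr rfl hL, Finset.sum_congr rfl hR, Finset.sum_sigma', Finset.sum_sigma']
  refine Finset.sum_nbij' (fun p => ⟨p.1 + p.2, p.2⟩) (fun p => ⟨p.1 - p.2, p.2⟩) ?_ ?_ ?_ ?_ ?_
  · rintro ⟨s, t⟩ hp
    simp only [Finset.mem_sigma, Finset.mem_range] at hp ⊢
    omega
  · rintro ⟨w, t⟩ hp
    simp only [Finset.mem_sigma, Finset.mem_range] at hp ⊢
    omega
  · rintro ⟨s, t⟩ hp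
    simp only [Finset.mem_sigma, Finset.mem_range] at hp
    have h3 : s + t - t = s := by omega
    simp [h3]
  · rintro ⟨w, t⟩ hp
    simp only [Finset.mem_sigma, Finset.mem_range] at hp
    have h3 : w - t + t = w := by omega
    simp [h3]
  · rintro ⟨s, t⟩ hp
    simp only [Finset.mem_sigma, Finset.mem_range] at hp
    have e1 : i - (s + t) = i - s - t := by omega
    have e2 : j + (s + t) = j + s + t := by omega
    have e3 : s + t - t = s := by omega
    have hc : ((j + s + t).choose (s + t) : ℂ) * ((s + t).choose t : ℂ)
        = ((j + s + t).choose t : ℂ) * ((j + s).choose s : ℂ) := by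
      have h := Nat.choose_mul (n := j + s + t) (k := s + t) (s := t) (by omega)
      rw [show j + s + t - t = j + s by omega, show s + t - t = s by omega] at h
      exact_mod_cast congrArg (fun n : ℕ => (n : ℂ)) h
    rw [e1, e2, e3, mul_pow, mul_pow,
      show e' ^ (i - s) = e' ^ (i - s - t) * e' ^ t from by rw [← pow_add]; congr 1; omega]
    linear_combination -(e ^ (i - s - t) * e' ^ (i - s - t) * e' ^ t * c ^ t * c' ^ s *
      MvPowerSeries.coeff (Finsupp.single 0 (i - s - t) + Finsupp.single 1 (j + s + t)) u) * hc

lemma compLin_neg (e c : ℂ) (u : MvPowerSeries (Fin 2) ℂ) :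
    compLin e c (-u) = -compLin e c u := by
  apply MvPowerSeries.ext
  intro m
  rw [map_neg, compLin_coeff, compLin_coeff, ← Finset.sum_neg_distrib]
  exact Finset.sum_congr rfl fun t _ => by rw [map_neg]; ring

lemma key_eq (v : MvPowerSeries (Fin 2) ℂ)
    (h1 : compLin (-1) (-2) v = -v) (h2 : compLin (-1) 2 v = -v) (i j : ℕ) :
    ∑ t ∈ range (i + 1), (4 : ℂ) ^ t * ((j + t).choose t : ℂ) *
        MvPowerSeries.coeff (Finsupp.single 0 (i - t) + Finsupp.single 1 (j + t)) v
      = MvPowerSeries.coeff (Finsupp.single 0 i + Finsupp.single 1 j) v := by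
  have hB : MvPowerSeries.coeff (Finsupp.single 0 i + Finsupp.single 1 j) (compLin 1 4 v)
      = MvPowerSeries.coeff (Finsupp.single 0 i + Finsupp.single 1 j) v := by
    calc MvPowerSeries.coeff (Finsupp.single 0 i + Finsupp.single 1 j) (compLin 1 4 v)
        = MvPowerSeries.coeff (Finsupp.single 0 i + Finsupp.single 1 j)
            (compLin ((-1) * (-1)) ((-2) * (-1) + 2) v) := by norm_num
      _ = MvPowerSeries.coeff (Finsupp.single 0 i + Finsupp.single 1 j)
            (compLin (-1) 2 (compLin (-1) (-2) v)) := (compLin_comp (-1) (-2) (-1) 2 v i j).symm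
      _ = MvPowerSeries.coeff (Finsupp.single 0 i + Finsupp.single 1 j)
            (compLin (-1) 2 (-v)) := by rw [h1]
      _ = MvPowerSeries.coeff (Finsupp.single 0 i + Finsupp.single 1 j)
            (-(compLin (-1) 2 v)) := by rw [compLin_neg]
      _ = -MvPowerSeries.coeff (Finsupp.single 0 i + Finsupp.single 1 j)
            (compLin (-1) 2 v) := by rw [map_neg]
      _ = -MvPowerSeries.coeff (Finsupp.single 0 i + Finsupp.single 1 j) (-v) := by rw [h2]
      _ = MvPowerSeries.coeff (Finsupp.single 0 i + Finsupp.single 1 j) v := by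
            rw [map_neg, neg_neg]
  rw [← hB, compLin_coeff']
  exact Finset.sum_congr rfl fun t _ => by rw [one_pow]; ring

lemma claimA (v : MvPowerSeries (Fin 2) ℂ)
    (h1 : compLin (-1) (-2) v = -v) (h2 : compLin (-1) 2 v = -v) :
    ∀ i j : ℕ, j ≠ 0 →
      MvPowerSeries.coeff (Finsupp.single 0 i + Finsupp.single 1 j) v = 0 := by
  intro i
  induction i using Nat.strong_induction_on with
  | _ i ih =>
    intro j hj
    have h := key_eq v h1 h2 (i + 1) (j - 1)
    rw [Finset.sum_range_succ', Finset.sum_range_succ'] at h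
    have hz : ∑ t ∈ range i, (4 : ℂ) ^ (t + 1 + 1) * ((j - 1 + (t + 1 + 1)).choose (t + 1 + 1) : ℂ) *
        MvPowerSeries.coeff
          (Finsupp.single 0 (i + 1 - (t + 1 + 1)) + Finsupp.single 1 (j - 1 + (t + 1 + 1))) v = 0 := by
      refine Finset.sum_eq_zero fun t ht => ?_
      simp only [Finset.mem_range] at ht
      rw [ih (i + 1 - (t + 1 + 1)) (by omega) (j - 1 + (t + 1 + 1)) (by omega), mul_zero]
    rw [hz, zero_add] at h
    simp only [Nat.add_zero, Nat.sub_zero, Nat.choose_zero_right, pow_zero, Nat.cast_one,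
      one_mul] at h
    have hf1 : (4 : ℂ) ^ (0 + 1) * ((j - 1 + (0 + 1)).choose (0 + 1) : ℂ) *
        MvPowerSeries.coeff
          (Finsupp.single 0 (i + 1 - (0 + 1)) + Finsupp.single 1 (j - 1 + (0 + 1))) v = 0 := by
      linear_combination h
    rw [show i + 1 - (0 + 1) = i from by omega, show j - 1 + (0 + 1) = j from by omega,
      Nat.choose_one_right] at hf1
    rcases mul_eq_zero.mp hf1 with h' | h'
    · exfalso
      rcases mul_eq_zero.mp h' with h'' | h''
      · norm_num at h''
      · exact Nat.cast_ne_zero.mpr hj h''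
    · exact h'

lemma claimB (v : MvPowerSeries (Fin 2) ℂ)
    (h1 : compLin (-1) (-2) v = -v) (h2 : compLin (-1) 2 v = -v) (i : ℕ) :
    (-1 : ℂ) ^ i * MvPowerSeries.coeff (Finsupp.single 0 i) v =
      -MvPowerSeries.coeff (Finsupp.single 0 i) v := by
  have hpair : (Finsupp.single 0 i + Finsupp.single 1 0 : Fin 2 →₀ ℕ) = Finsupp.single 0 i := by
    simp
  have h : MvPowerSeries.coeff (Finsupp.single 0 i + Finsupp.single 1 0)
      (compLin (-1) (-2) v) =
      MvPowerSeries.coeff (Finsupp.single 0 i + Finsupp.single 1 0) (-v) := by rw [h1]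
  rw [compLin_coeff', map_neg, Finset.sum_range_succ'] at h
  have hz : ∑ t ∈ range i, (-1 : ℂ) ^ (i - (t + 1)) * (-2 : ℂ) ^ (t + 1) *
      ((0 + (t + 1)).choose (t + 1) : ℂ) *
      MvPowerSeries.coeff
        (Finsupp.single 0 (i - (t + 1)) + Finsupp.single 1 (0 + (t + 1))) v = 0 := by
    refine Finset.sum_eq_zero fun t ht => ?_
    rw [claimA v h1 h2 (i - (t + 1)) (0 + (t + 1)) (by omega), mul_zero]
  rw [hz, zero_add] at h
  norm_num at h
  exact h

/-- If a formal power series `v(x,y) ∈ ℂ[[x,y]]` is skew-invariant under both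
`τ₁*(x,y) = (-x, -2x+y)` and `τ₂*(x,y) = (-x, 2x+y)` (i.e. `v∘τ₁* = -v`, `v∘τ₂* = -v`),
then `v` is independent of `y` and satisfies `v(-x,0) = -v(x,0)` (coefficientwise:
`(-1)^i v_{i,0} = -v_{i,0}`); hence if additionally `v(x,0) = v(-x,0)`, then `v = 0`. -/
theorem stmt_9 (v : MvPowerSeries (Fin 2) ℂ)
    (h1 : compLin (-1) (-2) v = -v) (h2 : compLin (-1) 2 v = -v) :
    (∀ m : Fin 2 →₀ ℕ, m 1 ≠ 0 → MvPowerSeries.coeff m v = 0) ∧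
    (∀ i : ℕ, (-1 : ℂ) ^ i * MvPowerSeries.coeff (Finsupp.single 0 i) v =
        -MvPowerSeries.coeff (Finsupp.single 0 i) v) ∧
    ((∀ i : ℕ, MvPowerSeries.coeff (Finsupp.single 0 i) v =
        (-1 : ℂ) ^ i * MvPowerSeries.coeff (Finsupp.single 0 i) v) → v = 0) := by
  refine ⟨?_, claimB v h1 h2, ?_⟩
  · intro m hm
    rw [fin2_decomp m]
    exact claimA v h1 h2 (m 0) (m 1) hm
  · intro hyp
    apply MvPowerSeries.ext
    intro m
    rw [map_zero]
    by_cases hm : m 1 = 0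
    · have hd : m = Finsupp.single 0 (m 0) := by
        rw [fin2_decomp m, hm]; simp
      rw [hd]
      have ha := (hyp (m 0)).trans (claimB v h1 h2 (m 0))
      linear_combination ha / 2
    · rw [fin2_decomp m]
      exact claimA v h1 h2 (m 0) (m 1) hm
end

section
/- The injectivity of the linearized operator: if formal power series u, v in (x,y) satisfy u∘τ₁* + u = 0, v∘τ₁* - v + 2u = 0, u∘τ₂* + u = 0, v∘τ₂* - v - 2u = 0, together with the normalization u(0,y) = 0, u(x,0) = u(-x,0), v(x,0) = -v(-x,0), then u = 0 and v = 0. -/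
/-!
Write `w_{ij}` for the coefficient of `x^i y^j`. Composing with `τ(x,y) = (e·x, c·x + y)` only
moves mass from `x^{i-t} y^{j+t}` to `x^i y^j`, so it is triangular with respect to the
`x`-degree. Suppose `w ∘ τ = σ w` for both `c` and `-c`, and argue by induction on `i`. Once all
columns of `x`-degree below `i` vanish, the coefficient of `x^i y^j` reads `e^i w_{ij} = σ w_{ij}`,
which kills column `i` unless `e^i = σ`. In that case, the difference of the two equations at
`x^{i+1} y^k` is `2 e^i c (k+1) w_{i,k+1} = 0`, and the normalization supplies `w_{i0} = 0`.
For `u` this applies with `σ = -1`; then `u = 0`, and it applies to `v` with `σ = 1`.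
-/

open MvPowerSeries

noncomputable def xyExp (i j : ℕ) : Fin 2 →₀ ℕ :=
  Finsupp.single 0 i + Finsupp.single 1 j

@[simp]
lemma xyExp_apply_zero (i j : ℕ) : xyExp i j 0 = i := by
  simp [xyExp]

@[simp]
lemma xyExp_apply_one (i j : ℕ) : xyExp i j 1 = j := by
  simp [xyExp]

lemma xyExp_zero_right (i : ℕ) : xyExp i 0 = Finsupp.single 0 i := by
  simp [xyExp]

lemma xyExp_apply_self (m : Fin 2 →₀ ℕ) : xyExp (m 0) (m 1) = m := by
  ext a
  fin_cases a <;> simp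

lemma ext_xyExp {w w' : MvPowerSeries (Fin 2) ℂ}
    (h : ∀ i j, coeff (xyExp i j) w = coeff (xyExp i j) w') : w = w' := by
  ext m
  rw [← xyExp_apply_self m]
  exact h _ _

lemma coeff_compLin (e c : ℂ) (w : MvPowerSeries (Fin 2) ℂ) (i j : ℕ) :
    coeff (xyExp i j) (compLin e c w) =
      ∑ t ∈ Finset.range (i + 1),
        e ^ (i - t) * c ^ t * ((j + t).choose t : ℂ) * coeff (xyExp (i - t) (j + t)) w := by
  rw [coeff_apply]
  simp only [compLin, xyExp_apply_zero, xyExp_apply_one]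
  rfl

section LowerColumnsVanish

variable {w : MvPowerSeries (Fin 2) ℂ} {i : ℕ}
  (hlow : ∀ i' < i, ∀ j, coeff (xyExp i' j) w = 0)
include hlow

lemma coeff_compLin_of_lower_eq_zero (e c : ℂ) (j : ℕ) :
    coeff (xyExp i j) (compLin e c w) = e ^ i * coeff (xyExp i j) w := by
  rw [coeff_compLin, Finset.sum_range_succ', Finset.sum_eq_zero]
  · simp
  · intro t ht
    rw [hlow _ (by grind) _, mul_zero]

lemma coeff_succ_compLin_of_lower_eq_zero (e c : ℂ) (k : ℕ) :
    coeff (xyExp (i + 1) k) (compLin e c w) =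
      e ^ (i + 1) * coeff (xyExp (i + 1) k) w +
        e ^ i * c * (k + 1) * coeff (xyExp i (k + 1)) w := by
  rw [coeff_compLin, Finset.sum_range_succ', Finset.sum_range_succ', Finset.sum_eq_zero]
  · simp only [zero_add, add_tsub_cancel_right, pow_one, Nat.choose_one_right, Nat.cast_add,
      Nat.cast_one, tsub_zero, pow_zero, mul_one, add_zero, Nat.choose_zero_right]
    ring
  · intro t ht
    rw [hlow _ (by grind) _, mul_zero]

end LowerColumnsVanish

theorem eq_zero_of_compLin_eq_smul {e c σ : ℂ} (he : e ≠ 0) (hc : c ≠ 0)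
    {w : MvPowerSeries (Fin 2) ℂ} (hpos : compLin e c w = σ • w)
    (hneg : compLin e (-c) w = σ • w)
    (hbase : ∀ i, e ^ i = σ → coeff (Finsupp.single 0 i) w = 0) : w = 0 := by
  refine ext_xyExp fun i => ?_
  induction i using Nat.strong_induction_on with
  | _ i hlow =>
    intro j
    by_cases hσ : e ^ i = σ
    · cases j with
      | zero => simpa [xyExp_zero_right] using hbase i hσ
      | succ k =>
        have hp := congrArg (coeff (xyExp (i + 1) k)) hpos
        have hn := congrArg (coeff (xyExp (i + 1) k)) hneg
        rw [coeff_succ_compLin_of_lower_eq_zero hlow, coeff_smul] at hp hn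
        have hdiff : 2 * e ^ i * c * (k + 1) * coeff (xyExp i (k + 1)) w = 0 := by
          linear_combination hp - hn
        have hunit : 2 * e ^ i * c * (k + 1) ≠ 0 :=
          mul_ne_zero (mul_ne_zero (mul_ne_zero two_ne_zero (pow_ne_zero i he)) hc)
            (Nat.cast_add_one_ne_zero k)
        simpa using (mul_eq_zero.mp hdiff).resolve_left hunit
    · have h := congrArg (coeff (xyExp i j)) hpos
      rw [coeff_compLin_of_lower_eq_zero hlow, coeff_smul] at h
      have hdiff : (e ^ i - σ) * coeff (xyExp i j) w = 0 := by
        linear_combination h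
      simpa using (mul_eq_zero.mp hdiff).resolve_left (sub_ne_zero.mpr hσ)

theorem stmt_10_general (u v : MvPowerSeries (Fin 2) ℂ)
    (e1 : compLin (-1) (-2) u + u = 0)
    (e2 : compLin (-1) (-2) v - v + 2 * u = 0)
    (e3 : compLin (-1) 2 u + u = 0)
    (e4 : compLin (-1) 2 v - v - 2 * u = 0)
    (n2 : ∀ i : ℕ, MvPowerSeries.coeff (Finsupp.single 0 i) u =
        (-1 : ℂ) ^ i * MvPowerSeries.coeff (Finsupp.single 0 i) u)
    (n3 : ∀ i : ℕ, MvPowerSeries.coeff (Finsupp.single 0 i) v =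
        -((-1 : ℂ) ^ i * MvPowerSeries.coeff (Finsupp.single 0 i) v)) :
    u = 0 ∧ v = 0 := by
  have hu : u = 0 := by
    refine eq_zero_of_compLin_eq_smul (e := -1) (c := 2) (σ := -1)
      (by norm_num) (by norm_num) ?_ ?_ ?_
    · rw [neg_one_smul]; exact eq_neg_of_add_eq_zero_left e3
    · rw [neg_one_smul]; exact eq_neg_of_add_eq_zero_left e1
    · intro i hi
      have := n2 i
      rw [hi] at this
      linear_combination this / 2
  subst hu
  refine ⟨rfl, eq_zero_of_compLin_eq_smul (e := -1) (c := 2) (σ := 1)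
    (by norm_num) (by norm_num) ?_ ?_ ?_⟩
  · rw [one_smul]; linear_combination e4
  · rw [one_smul]; linear_combination e2
  · intro i hi
    have := n3 i
    rw [hi] at this
    linear_combination this / 2

/-- Injectivity of the linearized operator.  If formal power series
`u, v ∈ ℂ[[x,y]]` satisfy `u∘τ₁* + u = 0`, `v∘τ₁* - v + 2u = 0`, `u∘τ₂* + u = 0`,
`v∘τ₂* - v - 2u = 0` (where `τ₁*(x,y) = (-x,-2x+y)`, `τ₂*(x,y) = (-x,2x+y)`),
together with the normalization `u(0,y) = 0`, `u(x,0) = u(-x,0)`,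
`v(x,0) = -v(-x,0)`, then `u = 0` and `v = 0`. -/
theorem stmt_10 (u v : MvPowerSeries (Fin 2) ℂ)
    (e1 : compLin (-1) (-2) u + u = 0)
    (e2 : compLin (-1) (-2) v - v + 2 * u = 0)
    (e3 : compLin (-1) 2 u + u = 0)
    (e4 : compLin (-1) 2 v - v - 2 * u = 0)
    (n1 : ∀ m : Fin 2 →₀ ℕ, m 0 = 0 → MvPowerSeries.coeff m u = 0)
    (n2 : ∀ i : ℕ, MvPowerSeries.coeff (Finsupp.single 0 i) u =
        (-1 : ℂ) ^ i * MvPowerSeries.coeff (Finsupp.single 0 i) u)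
    (n3 : ∀ i : ℕ, MvPowerSeries.coeff (Finsupp.single 0 i) v =
        -((-1 : ℂ) ^ i * MvPowerSeries.coeff (Finsupp.single 0 i) v)) :
    u = 0 ∧ v = 0 :=
  stmt_10_general u v e1 e2 e3 e4 n2 n3
end
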